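/- arXiv:2408.04890 — 2 statements merged into one kernel-verified Lean document; each statement's English description precedes it below -/
import Mathlib

section
/- For Φ(t) = (1+t)ln(1+t) − t, the Orlicz indices are p⁻_Φ = 1 and p⁺_Φ = 2. -/
open MeasureTheory Real Set Filter
open scoped ENNReal

/-- An Orlicz function, given by its right-continuous derivative `phi`. -/
structure OrliczFunction where
  phi : ℝ → ℝ
  mono : MonotoneOn phi (Set.Ici 0)
  rightCont : ∀ t, 0 ≤ t → ContinuousWithinAt phi (Set.Ici t) t
  map_zero : phi 0 = 0
  pos : ∀ t, 0 < t → 0 < phi t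
  tendsto_atTop : Filter.Tendsto phi Filter.atTop Filter.atTop
  delta2 : ∃ C > 0, ∀ t, 0 ≤ t →
    (∫ s in (0:ℝ)..(2 * t), phi s) ≤ C * ∫ s in (0:ℝ)..t, phi s

/-- The Orlicz function itself: `Φ(t) = ∫₀ᵗ φ(s) ds`. -/
noncomputable def OrliczFunction.Phi (O : OrliczFunction) (t : ℝ) : ℝ :=
  ∫ s in (0:ℝ)..t, O.phi s

/-- The set `{ tφ(t)/Φ(t) : t > 0 }` used to define the Orlicz indices. -/
def OrliczFunction.indexSet (O : OrliczFunction) : Set ℝ :=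
  {r | ∃ t, 0 < t ∧ r = t * O.phi t / O.Phi t}

/-- Upper Orlicz index `p⁺_Φ`. -/
noncomputable def OrliczFunction.pPlus (O : OrliczFunction) : ℝ := sSup O.indexSet

/-- Lower Orlicz index `p⁻_Φ`. -/
noncomputable def OrliczFunction.pMinus (O : OrliczFunction) : ℝ := sInf O.indexSet

/-- Euclidean space `ℝᴺ`. -/
noncomputable abbrev E (N : ℕ) := EuclideanSpace ℝ (Fin N)

/-- Last coordinate `x_N` of `x ∈ ℝᴺ`. -/
noncomputable def lastCoord {N : ℕ} (hN : 0 < N) (x : E N) : ℝ :=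
  x ⟨N - 1, Nat.sub_lt hN Nat.one_pos⟩

/-- First `N-1` coordinates `x′` of `x ∈ ℝᴺ`. -/
noncomputable def firstCoords {N : ℕ} (x : E N) : E (N - 1) :=
  WithLp.toLp 2 (fun i => x (Fin.castLE (Nat.sub_le N 1) i))

/-- The cube `Ω_{n,T} = (-n,n)^{N-1} × (0,T)`. -/
def cube {N : ℕ} (hN : 0 < N) (n T : ℝ) : Set (E N) :=
  {x | (∀ i, firstCoords x i ∈ Set.Ioo (-n) n) ∧ lastCoord hN x ∈ Set.Ioo 0 T}

/-- The domain above the graph of `γ : ℝ^{N-1} → ℝ`. -/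
def aboveGraph {N : ℕ} (hN : 0 < N) (γ : E (N - 1) → ℝ) : Set (E N) :=
  {x | γ (firstCoords x) < lastCoord hN x}

/-- The fractional Orlicz Gagliardo modular `∫_Ω∫_Ω Φ(|D_s u(x,y)|) dμ`. -/
noncomputable def fracModular {N : ℕ} (O : OrliczFunction) (s : ℝ) (Ω : Set (E N))
    (u : E N → ℝ) : ℝ :=
  ∫ x in Ω, ∫ y in Ω, O.Phi (|u x - u y| / dist x y ^ s) / dist x y ^ N

/-- The weighted fractional Orlicz modular `∫_Ω∫_Ω Φ(|D_s u| x_N^{α₁} y_N^{α₂}) dμ`. -/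
noncomputable def fracModularW {N : ℕ} (O : OrliczFunction) (s α₁ α₂ : ℝ) (hN : 0 < N)
    (Ω : Set (E N)) (u : E N → ℝ) : ℝ :=
  ∫ x in Ω, ∫ y in Ω,
    O.Phi (|u x - u y| / dist x y ^ s * lastCoord hN x ^ α₁ * lastCoord hN y ^ α₂) /
      dist x y ^ N

/-- `u ∈ C¹_c(Ω)`. -/
def IsCc1 {N : ℕ} (Ω : Set (E N)) (u : E N → ℝ) : Prop :=
  ContDiff ℝ 1 u ∧ HasCompactSupport u ∧ tsupport u ⊆ Ω

/-- A bounded Lipschitz domain: near each boundary point, up to an isometry, the set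
coincides with the region above the graph of a Lipschitz function. -/
def IsBoundedLipschitzDomain {N : ℕ} (hN : 0 < N) (Ω : Set (E N)) : Prop :=
  IsOpen Ω ∧ Bornology.IsBounded Ω ∧ Ω.Nonempty ∧
    ∀ x ∈ frontier Ω, ∃ r > 0, ∃ T : E N ≃ᵢ E N, ∃ γ : E (N - 1) → ℝ, ∃ L : NNReal,
      LipschitzWith L γ ∧
        (T '' Ω) ∩ Metric.ball (T x) r = aboveGraph hN γ ∩ Metric.ball (T x) r

/-- distance to the boundary -/
noncomputable def distBd {N : ℕ} (Ω : Set (E N)) (x : E N) : ℝ :=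
  Metric.infDist x (frontier Ω)

/-!
The derivative of `Φ(t) = (1 + t) log (1 + t) - t` is `φ(t) = log (1 + t)`, so the index ratio is
`r(t) = t log (1 + t) / Φ(t)`. The elementary bounds `t / (1 + t) < log (1 + t) < t` and
`2t / (2 + t) < log (1 + t)` give `1 < r(t) < 2` for `t > 0`, while `r(t) → 1` as `t → ∞` and,
by L'Hôpital's rule, `r(t) → 2` as `t → 0⁺`. Hence `inf r = 1` and `sup r = 2`.
-/

open scoped Topology

namespace Real

theorem one_sub_inv_lt_log {x : ℝ} (hx : 0 < x) (hx1 : x ≠ 1) : 1 - x⁻¹ < log x := by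
  have := log_lt_sub_one_of_pos (inv_pos.mpr hx) (inv_ne_one.mpr hx1)
  rw [log_inv] at this
  linarith

theorem hasDerivAt_log_one_add {t : ℝ} (ht : -1 < t) :
    HasDerivAt (fun x => log (1 + x)) (1 + t)⁻¹ t := by
  simpa using ((hasDerivAt_id' t).const_add 1).log (by linarith)

theorem hasDerivAt_add_mul_log_one_add (a : ℝ) {t : ℝ} (ht : -1 < t) :
    HasDerivAt (fun x => (a + x) * log (1 + x)) (log (1 + t) + (a + t) * (1 + t)⁻¹) t := by
  simpa using ((hasDerivAt_id' t).const_add a).fun_mul (hasDerivAt_log_one_add ht)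

theorem hasDerivAt_mul_log_one_add {t : ℝ} (ht : -1 < t) :
    HasDerivAt (fun x => x * log (1 + x)) (log (1 + t) + t * (1 + t)⁻¹) t := by
  simpa using hasDerivAt_add_mul_log_one_add 0 ht

theorem hasDerivAt_one_add_mul_log_one_add_sub {t : ℝ} (ht : -1 < t) :
    HasDerivAt (fun x => (1 + x) * log (1 + x) - x) (log (1 + t)) t := by
  refine ((hasDerivAt_add_mul_log_one_add 1 ht).fun_sub (hasDerivAt_id' t)).congr_deriv ?_
  rw [mul_inv_cancel₀ (by linarith)]
  ring

theorem lt_one_add_mul_log_one_add {t : ℝ} (ht : 0 < t) : t < (1 + t) * log (1 + t) := by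
  have h := one_sub_inv_lt_log (by linarith : 0 < 1 + t) (by linarith)
  have h1 : (1 + t) * (1 - (1 + t)⁻¹) = t := by field_simp; ring
  nlinarith

theorem two_mul_lt_two_add_mul_log_one_add {t : ℝ} (ht : 0 < t) :
    2 * t < (2 + t) * log (1 + t) := by
  set G : ℝ → ℝ := fun x => (2 + x) * log (1 + x) - 2 * x with hG
  have hG' : ∀ x, 0 ≤ x → HasDerivAt G (log (1 + x) - (1 - (1 + x)⁻¹)) x := by
    intro x hx
    refine ((hasDerivAt_add_mul_log_one_add 2 (by linarith)).fun_sub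
      ((hasDerivAt_id' x).const_mul 2)).congr_deriv ?_
    field_simp
    ring
  have hG_mono : StrictMonoOn G (Ici 0) := by
    refine strictMonoOn_of_deriv_pos (convex_Ici 0)
      (fun x hx => (hG' x hx).continuousAt.continuousWithinAt) fun x hx => ?_
    rw [interior_Ici] at hx
    rw [(hG' x (le_of_lt hx)).deriv, sub_pos]
    exact one_sub_inv_lt_log (by linarith [mem_Ioi.mp hx]) (by linarith [mem_Ioi.mp hx])
  simpa [hG] using hG_mono self_mem_Ici ht.le ht

end Real

noncomputable def llogIndexRatio (t : ℝ) : ℝ :=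
  t * log (1 + t) / ((1 + t) * log (1 + t) - t)

theorem one_lt_llogIndexRatio {t : ℝ} (ht : 0 < t) : 1 < llogIndexRatio t := by
  have hlog : log (1 + t) < t := by
    linarith [log_lt_sub_one_of_pos (by linarith : 0 < 1 + t) (by linarith)]
  rw [llogIndexRatio, one_lt_div (sub_pos.mpr (lt_one_add_mul_log_one_add ht))]
  linarith

theorem llogIndexRatio_lt_two {t : ℝ} (ht : 0 < t) : llogIndexRatio t < 2 := by
  rw [llogIndexRatio, div_lt_iff₀ (sub_pos.mpr (lt_one_add_mul_log_one_add ht))]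
  linarith [two_mul_lt_two_add_mul_log_one_add ht]

theorem tendsto_llogIndexRatio_atTop : Tendsto llogIndexRatio atTop (𝓝 1) := by
  have hlog : Tendsto (fun t => log (1 + t)) atTop atTop :=
    tendsto_log_atTop.comp (tendsto_atTop_add_const_left _ 1 tendsto_id)
  have h : Tendsto (fun t => (1 + t⁻¹ - (log (1 + t))⁻¹)⁻¹) atTop (𝓝 (1 + 0 - 0)⁻¹) :=
    ((tendsto_const_nhds.add tendsto_inv_atTop_zero).sub
      (tendsto_inv_atTop_zero.comp hlog)).inv₀ (by norm_num)
  rw [show ((1 : ℝ) + 0 - 0)⁻¹ = 1 by norm_num] at h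
  refine h.congr' ?_
  filter_upwards [eventually_gt_atTop 0] with t ht
  have hL : 0 < log (1 + t) := log_pos (by linarith)
  rw [llogIndexRatio]
  field_simp
  ring

theorem tendsto_llogIndexRatio_nhdsGT_zero : Tendsto llogIndexRatio (𝓝[>] 0) (𝓝 2) := by
  have hpos : ∀ᶠ t in 𝓝[>] (0 : ℝ), 0 < t := self_mem_nhdsWithin
  have hslope : Tendsto (fun t => t⁻¹ * log (1 + t)) (𝓝[>] 0) (𝓝 1) := by
    simpa using (hasDerivAt_log one_ne_zero).tendsto_slope_zero_right
  have hdiv : Tendsto (fun t => (log (1 + t) + t * (1 + t)⁻¹) / log (1 + t)) (𝓝[>] 0)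
      (𝓝 2) := by
    have h : Tendsto (fun t => 1 + ((1 + t) * (t⁻¹ * log (1 + t)))⁻¹) (𝓝[>] 0)
        (𝓝 (1 + ((1 + 0) * 1)⁻¹)) :=
      tendsto_const_nhds.add ((((tendsto_const_nhds.add tendsto_id).mono_left
        nhdsWithin_le_nhds).mul hslope).inv₀ (by norm_num))
    norm_num at h
    refine h.congr' ?_
    filter_upwards [hpos] with t ht
    have hL : 0 < log (1 + t) := log_pos (by linarith)
    field_simp
  refine HasDerivAt.lhopital_zero_nhdsGT (f' := fun t => log (1 + t) + t * (1 + t)⁻¹)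
    (g' := fun t => log (1 + t)) ?_ ?_ ?_ ?_ ?_ hdiv
  · filter_upwards [hpos] with t ht using hasDerivAt_mul_log_one_add (by linarith)
  · filter_upwards [hpos] with t ht using hasDerivAt_one_add_mul_log_one_add_sub (by linarith)
  · filter_upwards [hpos] with t ht using (log_pos (by linarith)).ne'
  · simpa using ((hasDerivAt_mul_log_one_add (t := 0) (by norm_num)).continuousAt.tendsto
      |>.mono_left nhdsWithin_le_nhds)
  · simpa using ((hasDerivAt_one_add_mul_log_one_add_sub (t := 0) (by norm_num)).continuousAt
      |>.tendsto.mono_left nhdsWithin_le_nhds)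

namespace OrliczFunction

theorem hasDerivWithinAt_Phi_Ici (O : OrliczFunction) {t : ℝ} (ht : 0 ≤ t) :
    HasDerivWithinAt O.Phi (O.phi t) (Ici t) t := by
  have hint : IntervalIntegrable O.phi volume 0 t :=
    (O.mono.mono (by rw [uIcc_of_le ht]; exact fun x hx => hx.1)).intervalIntegrable
  have hmeas : StronglyMeasurableAtFilter O.phi (𝓝[>] t) :=
    ⟨Ioi t, self_mem_nhdsWithin, (aemeasurable_restrict_of_monotoneOn measurableSet_Ioi
      (O.mono.mono fun x hx => ht.trans (le_of_lt hx))).aestronglyMeasurable⟩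
  exact intervalIntegral.integral_hasDerivWithinAt_right hint hmeas
    ((O.rightCont t ht).mono Ioi_subset_Ici_self)

theorem phi_eq_of_hasDerivAt (O : OrliczFunction) {F : ℝ → ℝ} {t F' : ℝ} (ht : 0 ≤ t)
    (hF : EqOn O.Phi F (Ici t)) (hF' : HasDerivAt F F' t) : O.phi t = F' :=
  (uniqueDiffWithinAt_Ici t).eq_deriv _ (O.hasDerivWithinAt_Phi_Ici ht)
    (hF'.hasDerivWithinAt.congr_of_mem hF self_mem_Ici)

theorem indexSet_eq_image_llogIndexRatio (O : OrliczFunction)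
    (hPhi : ∀ t : ℝ, 0 ≤ t → O.Phi t = (1 + t) * log (1 + t) - t) :
    O.indexSet = llogIndexRatio '' Ioi 0 := by
  ext r
  refine exists_congr fun t => and_congr_right fun ht => ?_
  have hphi : O.phi t = log (1 + t) :=
    O.phi_eq_of_hasDerivAt ht.le (fun s hs => hPhi s (ht.le.trans hs))
      (hasDerivAt_one_add_mul_log_one_add_sub (by linarith))
  rw [hphi, hPhi t ht.le, eq_comm, llogIndexRatio]

end OrliczFunction

theorem stmt5 (O : OrliczFunction)
    (hPhi : ∀ t : ℝ, 0 ≤ t → O.Phi t = (1 + t) * Real.log (1 + t) - t) :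
    O.pMinus = 1 ∧ O.pPlus = 2 := by
  have hne : (llogIndexRatio '' Ioi 0).Nonempty := nonempty_Ioi.image _
  rw [OrliczFunction.pMinus, OrliczFunction.pPlus, O.indexSet_eq_image_llogIndexRatio hPhi]
  constructor
  · refine (isGLB_of_mem_closure ?_ ?_).csInf_eq hne
    · rintro _ ⟨t, ht, rfl⟩
      exact (one_lt_llogIndexRatio ht).le
    · exact mem_closure_of_tendsto tendsto_llogIndexRatio_atTop
        ((eventually_gt_atTop 0).mono fun t ht => mem_image_of_mem _ ht)
  · refine (isLUB_of_mem_closure ?_ ?_).csSup_eq hne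
    · rintro _ ⟨t, ht, rfl⟩
      exact (llogIndexRatio_lt_two ht).le
    · exact mem_closure_of_tendsto tendsto_llogIndexRatio_nhdsGT_zero
        (eventually_mem_nhdsWithin.mono fun t ht => mem_image_of_mem _ ht)
end

section
/- Let Φ be an Orlicz function and Λ > 1. There exists a constant C = C(Φ,Λ) > 0 such that Φ(a+b) ≤ λΦ(a) + C(λ−1)^{1−p⁺_Φ} Φ(b) for all a, b ∈ [0,∞) and all λ ∈ (1,Λ]. -/
open MeasureTheory Real Set Filter
open scoped ENNReal

/-!
With `p = p⁺_Φ` we have `tφ(t) ≤ p Φ(t)`, so Grönwall's inequality applied to `s ↦ Φ(t eˢ)`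
gives `Φ(Mt) ≤ Mᵖ Φ(t)` for `M ≥ 1`. Since `φ` is nondecreasing, `Φ` is convex, and writing
`a + b = θ (a/θ) + (1 - θ) (b/(1 - θ))` yields
`Φ(a + b) ≤ θ^(1-p) Φ(a) + (1 - θ)^(1-p) Φ(b)`.
For `θ = λ^(-1/p)` the first coefficient is `λ^(1-1/p) ≤ λ`, and Bernoulli's inequality gives
`1 - θ ≥ (λ - 1)/(pλ) ≥ (λ - 1)/(pΛ)`, which bounds the second by `(pΛ)^(p-1) (λ - 1)^(1-p)`.
-/

namespace OrliczFunction

variable (O : OrliczFunction)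

lemma phi_nonneg {t : ℝ} (ht : 0 ≤ t) : 0 ≤ O.phi t := by
  simpa [O.map_zero] using O.mono self_mem_Ici (mem_Ici.2 ht) ht

lemma intervalIntegrable_phi {a b : ℝ} (ha : 0 ≤ a) (hb : 0 ≤ b) :
    IntervalIntegrable O.phi volume a b :=
  (O.mono.mono fun _ hx ↦ (le_inf ha hb).trans hx.1).intervalIntegrable

lemma Phi_zero : O.Phi 0 = 0 := intervalIntegral.integral_same

lemma Phi_nonneg {t : ℝ} (ht : 0 ≤ t) : 0 ≤ O.Phi t :=
  intervalIntegral.integral_nonneg ht fun _ hx ↦ O.phi_nonneg hx.1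

lemma Phi_eq_add_integral {a b : ℝ} (ha : 0 ≤ a) (hab : a ≤ b) :
    O.Phi b = O.Phi a + ∫ s in a..b, O.phi s :=
  (intervalIntegral.integral_add_adjacent_intervals (O.intervalIntegrable_phi le_rfl ha)
    (O.intervalIntegrable_phi ha (ha.trans hab))).symm

lemma sub_mul_phi_le_integral {a b : ℝ} (ha : 0 ≤ a) (hab : a ≤ b) :
    (b - a) * O.phi a ≤ ∫ s in a..b, O.phi s := by
  simpa using intervalIntegral.integral_mono_on hab intervalIntegrable_const
    (O.intervalIntegrable_phi ha (ha.trans hab))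
    fun x hx ↦ O.mono (mem_Ici.2 ha) (mem_Ici.2 (ha.trans hx.1)) hx.1

lemma integral_le_sub_mul_phi {a b : ℝ} (ha : 0 ≤ a) (hab : a ≤ b) :
    ∫ s in a..b, O.phi s ≤ (b - a) * O.phi b := by
  simpa using intervalIntegral.integral_mono_on hab
    (O.intervalIntegrable_phi ha (ha.trans hab)) intervalIntegrable_const
    fun x hx ↦ O.mono (mem_Ici.2 (ha.trans hx.1)) (mem_Ici.2 (ha.trans hab)) hx.2

lemma Phi_pos {t : ℝ} (ht : 0 < t) : 0 < O.Phi t := by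
  have hsplit := O.Phi_eq_add_integral (by positivity : 0 ≤ t / 2) (by linarith : t / 2 ≤ t)
  have hlower := O.sub_mul_phi_le_integral (by positivity : 0 ≤ t / 2) (by linarith : t / 2 ≤ t)
  have := mul_pos (by linarith : 0 < t - t / 2) (O.pos (t / 2) (by positivity))
  linarith [O.Phi_nonneg (by positivity : 0 ≤ t / 2)]

lemma convexOn_Phi : ConvexOn ℝ (Ici 0) O.Phi := by
  refine convexOn_of_slope_mono_adjacent (convex_Ici 0) fun {x y z} hx _ hxy hyz ↦ ?_
  have hy : 0 ≤ y := le_trans hx hxy.le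
  calc (O.Phi y - O.Phi x) / (y - x) ≤ O.phi y := by
        rw [div_le_iff₀ (sub_pos.2 hxy), O.Phi_eq_add_integral hx hxy.le, mul_comm]
        linarith [O.integral_le_sub_mul_phi hx hxy.le]
    _ ≤ (O.Phi z - O.Phi y) / (z - y) := by
        rw [le_div_iff₀ (sub_pos.2 hyz), O.Phi_eq_add_integral hy hyz.le, mul_comm]
        linarith [O.sub_mul_phi_le_integral hy hyz.le]

lemma bddAbove_indexSet : BddAbove O.indexSet := by
  obtain ⟨D, -, hD⟩ := O.delta2
  refine ⟨D, ?_⟩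
  rintro r ⟨t, ht, rfl⟩
  rw [div_le_iff₀ (O.Phi_pos ht)]
  have hsplit := O.Phi_eq_add_integral ht.le (by linarith : t ≤ 2 * t)
  have hlower := O.sub_mul_phi_le_integral ht.le (by linarith : t ≤ 2 * t)
  have hdouble : O.Phi (2 * t) ≤ D * O.Phi t := hD t ht.le
  rw [show 2 * t - t = t by ring] at hlower
  linarith [O.Phi_nonneg ht.le]

lemma mul_phi_le_pPlus_mul_Phi {t : ℝ} (ht : 0 ≤ t) : t * O.phi t ≤ O.pPlus * O.Phi t := by
  rcases ht.eq_or_lt with rfl | ht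
  · simp [O.Phi_zero]
  have h := le_csSup O.bddAbove_indexSet ⟨t, ht, rfl⟩
  rwa [div_le_iff₀ (O.Phi_pos ht)] at h

lemma one_le_pPlus : 1 ≤ O.pPlus := by
  have hPhi : O.Phi 1 ≤ 1 * O.phi 1 := by
    simpa [Phi] using O.integral_le_sub_mul_phi le_rfl zero_le_one
  exact ((one_le_div (O.Phi_pos one_pos)).2 hPhi).trans
    (le_csSup O.bddAbove_indexSet ⟨1, one_pos, rfl⟩)

lemma hasDerivWithinAt_Phi {t : ℝ} (ht : 0 ≤ t) :
    HasDerivWithinAt O.Phi (O.phi t) (Ici t) t :=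
  intervalIntegral.integral_hasDerivWithinAt_right (O.intervalIntegrable_phi le_rfl ht)
    ⟨Ioc t (t + 1), Ioc_mem_nhdsGT (lt_add_one t),
      (O.intervalIntegrable_phi ht (by linarith)).1.aestronglyMeasurable⟩
    ((O.rightCont t ht).mono Ioi_subset_Ici_self)

lemma continuousOn_Phi {T : ℝ} (hT : 0 ≤ T) : ContinuousOn O.Phi (Icc 0 T) := by
  rw [← uIcc_of_le hT]
  exact intervalIntegral.continuousOn_primitive_interval'
    (O.intervalIntegrable_phi le_rfl hT) left_mem_uIcc

lemma Phi_mul_le {t M : ℝ} (ht : 0 ≤ t) (hM : 1 ≤ M) :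
    O.Phi (M * t) ≤ M ^ O.pPlus * O.Phi t := by
  have hM0 : 0 < M := one_pos.trans_le hM
  set g : ℝ → ℝ := fun s ↦ t * exp s
  have hg : ∀ s, 0 ≤ g s := fun s ↦ by positivity
  have hcont : ContinuousOn (fun s ↦ O.Phi (g s)) (Icc 0 (log M)) :=
    (O.continuousOn_Phi (by positivity : 0 ≤ M * t)).comp (by fun_prop) fun s hs ↦
      ⟨hg s, by nlinarith [exp_le_exp.2 hs.2, exp_log hM0]⟩
  have hderiv : ∀ s ∈ Ico 0 (log M), HasDerivWithinAt (fun s ↦ O.Phi (g s))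
      (O.phi (g s) * (t * exp s)) (Ici s) s := fun s _ ↦
    (O.hasDerivWithinAt_Phi (hg s)).comp s ((hasDerivAt_exp s).const_mul t).hasDerivWithinAt
      fun r hr ↦ mul_le_mul_of_nonneg_left (exp_le_exp.2 hr) ht
  have hbound := norm_le_gronwallBound_of_norm_deriv_right_le (δ := O.Phi t) (ε := 0) hcont hderiv
    (by simp [g, abs_of_nonneg (O.Phi_nonneg ht)]) (fun s _ ↦ by
      rw [norm_of_nonneg (O.Phi_nonneg (hg s)), add_zero,
        norm_of_nonneg (mul_nonneg (O.phi_nonneg (hg s)) (hg s)), mul_comm]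
      exact O.mul_phi_le_pPlus_mul_Phi (hg s)) (log M) ⟨log_nonneg hM, le_rfl⟩
  rwa [gronwallBound_ε0, sub_zero, norm_of_nonneg (O.Phi_nonneg (hg _)), mul_comm O.pPlus,
    ← rpow_def_of_pos hM0, mul_comm, show g (log M) = M * t by simp [g, exp_log hM0, mul_comm]]
    at hbound

lemma mul_Phi_div_le {θ t : ℝ} (hθ₀ : 0 < θ) (hθ₁ : θ ≤ 1) (ht : 0 ≤ t) :
    θ * O.Phi (t / θ) ≤ θ ^ (1 - O.pPlus) * O.Phi t := by
  have hscale := O.Phi_mul_le ht (one_le_inv₀ hθ₀ |>.2 hθ₁)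
  rw [← div_eq_inv_mul, inv_rpow hθ₀.le, ← rpow_neg hθ₀.le] at hscale
  calc θ * O.Phi (t / θ) ≤ θ * (θ ^ (-O.pPlus) * O.Phi t) := by gcongr
    _ = θ ^ (1 - O.pPlus) * O.Phi t := by
      rw [← mul_assoc, sub_eq_add_neg, rpow_add hθ₀, rpow_one]

lemma Phi_add_le {a b θ : ℝ} (ha : 0 ≤ a) (hb : 0 ≤ b) (hθ₀ : 0 < θ) (hθ₁ : θ < 1) :
    O.Phi (a + b) ≤ θ ^ (1 - O.pPlus) * O.Phi a + (1 - θ) ^ (1 - O.pPlus) * O.Phi b := by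
  have hθ' : 0 < 1 - θ := sub_pos.2 hθ₁
  have hconv := O.convexOn_Phi.2 (mem_Ici.2 (div_nonneg ha hθ₀.le))
    (mem_Ici.2 (div_nonneg hb hθ'.le)) hθ₀.le hθ'.le (add_sub_cancel θ 1)
  rw [smul_eq_mul, smul_eq_mul, mul_div_cancel₀ a hθ₀.ne', mul_div_cancel₀ b hθ'.ne'] at hconv
  exact hconv.trans (add_le_add (O.mul_Phi_div_le hθ₀ hθ₁.le ha)
    (O.mul_Phi_div_le hθ' (by linarith) hb))

end OrliczFunction

lemma sub_one_div_mul_le_one_sub_rpow_neg_inv {p x : ℝ} (hp : 1 ≤ p) (hx : 0 < x) :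
    (x - 1) / (p * x) ≤ 1 - x ^ (-p⁻¹) := by
  have hbernoulli := rpow_one_add_le_one_add_mul_self (by linarith [inv_pos.2 hx] : -1 ≤ x⁻¹ - 1)
    (inv_nonneg.2 (zero_le_one.trans hp)) (inv_le_one_of_one_le₀ hp)
  rw [add_sub_cancel, inv_rpow hx.le, ← rpow_neg hx.le] at hbernoulli
  have hp0 : 0 < p := zero_lt_one.trans_le hp
  have : (x - 1) / (p * x) = p⁻¹ * (1 - x⁻¹) := by field_simp
  linarith

theorem stmt6 (O : OrliczFunction) (Λ : ℝ) (hΛ : 1 < Λ) :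
    ∃ C > 0, ∀ a b : ℝ, 0 ≤ a → 0 ≤ b → ∀ lam : ℝ, 1 < lam → lam ≤ Λ →
      O.Phi (a + b) ≤ lam * O.Phi a + C * (lam - 1) ^ (1 - O.pPlus) * O.Phi b := by
  set p := O.pPlus
  have hp : 1 ≤ p := O.one_le_pPlus
  have hp0 : 0 < p := zero_lt_one.trans_le hp
  refine ⟨(p * Λ) ^ (p - 1), by positivity, fun a b ha hb lam hlam hlamΛ ↦ ?_⟩
  have hlam0 : 0 < lam := zero_lt_one.trans hlam
  set θ := lam ^ (-p⁻¹)
  have hθ₀ : 0 < θ := by positivity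
  have hθ₁ : θ < 1 := rpow_lt_one_of_one_lt_of_neg hlam (by simpa using hp0)
  have hfirst : θ ^ (1 - p) ≤ lam := by
    rw [← rpow_mul hlam0.le]
    exact rpow_le_self_of_one_le hlam.le (by nlinarith [inv_mul_cancel₀ hp0.ne'])
  have hgap : (lam - 1) / (p * Λ) ≤ 1 - θ :=
    (div_le_div_of_nonneg_left (by linarith) (by positivity) (by gcongr)).trans
      (sub_one_div_mul_le_one_sub_rpow_neg_inv hp hlam0)
  have hsecond : (1 - θ) ^ (1 - p) ≤ (p * Λ) ^ (p - 1) * (lam - 1) ^ (1 - p) := by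
    calc (1 - θ) ^ (1 - p) ≤ ((lam - 1) / (p * Λ)) ^ (1 - p) :=
          rpow_le_rpow_of_nonpos (div_pos (by linarith) (by positivity)) hgap (by linarith)
      _ = (p * Λ) ^ (p - 1) * (lam - 1) ^ (1 - p) := by
          rw [div_rpow (by linarith) (by positivity), div_eq_mul_inv, ← rpow_neg (by positivity),
            neg_sub, mul_comm]
  calc O.Phi (a + b) ≤ θ ^ (1 - p) * O.Phi a + (1 - θ) ^ (1 - p) * O.Phi b :=
        O.Phi_add_le ha hb hθ₀ hθ₁
    _ ≤ lam * O.Phi a + (p * Λ) ^ (p - 1) * (lam - 1) ^ (1 - p) * O.Phi b := by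
        gcongr
        exacts [O.Phi_nonneg ha, O.Phi_nonneg hb]
end
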